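/- For r ≥ 2, the optimal success probability for minimum-error discrimination satisfies the lower bound P^opt ≥ (1/r)·(1 + (1/(r−1))·∑_{1≤i<j≤r} ‖qᵢρᵢ − q_jρ_j‖₁). -/

import Mathlib

open scoped ComplexOrder

/-- The operator absolute value `√(AᴴA)` of a matrix. -/
noncomputable def matAbs {n : ℕ} (A : Matrix (Fin n) (Fin n) ℂ) : Matrix (Fin n) (Fin n) ℂ :=
  (Matrix.posSemidef_conjTranspose_mul_self A).1.eigenvectorUnitary.1 *
    Matrix.diagonal ((↑) ∘ (√·) ∘ (Matrix.posSemidef_conjTranspose_mul_self A).1.eigenvalues) *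
    (star (Matrix.posSemidef_conjTranspose_mul_self A).1.eigenvectorUnitary : Matrix (Fin n) (Fin n) ℂ)

/-- The trace norm `‖A‖₁ = tr √(AᴴA)`. -/
noncomputable def traceNorm {n : ℕ} (A : Matrix (Fin n) (Fin n) ℂ) : ℝ :=
  ((matAbs A).trace).re

/-- The positive part `A⁺ = (|A| + A)/2` of a self-adjoint matrix `A`, so that
`A = A⁺ - A⁻` with `A⁺, A⁻ ≥ 0`. -/
noncomputable def matPosPart {n : ℕ} (A : Matrix (Fin n) (Fin n) ℂ) : Matrix (Fin n) (Fin n) ℂ :=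
  (2 : ℂ)⁻¹ • (matAbs A + A)

/-- A density operator: positive semidefinite with unit trace. -/
def IsDensity {n : ℕ} (ρ : Matrix (Fin n) (Fin n) ℂ) : Prop :=
  ρ.PosSemidef ∧ ρ.trace = 1

/-- A POVM with `r` outcomes: positive semidefinite effects summing to the identity. -/
def IsPOVM {n r : ℕ} (M : Fin r → Matrix (Fin n) (Fin n) ℂ) : Prop :=
  (∀ i, (M i).PosSemidef) ∧ ∑ i, M i = 1

/-- Success probability `∑ i, q i * tr (ρ i * M i)` of a measurement. -/
noncomputable def successProb {n r : ℕ} (q : Fin r → ℝ)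
    (ρ M : Fin r → Matrix (Fin n) (Fin n) ℂ) : ℝ :=
  ∑ i, q i * ((ρ i * M i).trace).re

/-- Optimal success probability under minimum-error discrimination. -/
noncomputable def optSuccess {n r : ℕ} (q : Fin r → ℝ)
    (ρ : Fin r → Matrix (Fin n) (Fin n) ℂ) : ℝ :=
  sSup {p | ∃ M, IsPOVM M ∧ p = successProb q ρ M}


/-! For each pair `i < j`, the Helstrom measurement, which answers `i` on the spectral projection
`P` of `qᵢρᵢ - qⱼρⱼ` onto its positive eigenvalues and `j` on `1 - P`, succeeds with weight
`(qᵢ + qⱼ + ‖qᵢρᵢ - qⱼρⱼ‖₁) / 2`. The uniform average of these `r(r-1)/2` measurements is again a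
POVM, its success probability is the average of theirs, and `∑_{i<j} (qᵢ + qⱼ) = r - 1` turns
that average into the bound. -/

open Matrix Finset
open scoped MatrixOrder

section Spectral

variable {𝕜 m : Type*} [RCLike 𝕜] [Fintype m] [DecidableEq m]

lemma Matrix.trace_mul_nonneg {A B : Matrix m m 𝕜} (hA : 0 ≤ A) (hB : 0 ≤ B) :
    0 ≤ (A * B).trace := by
  have hsqrt : star (CFC.sqrt A) = CFC.sqrt A := (CFC.sqrt_nonneg A).isSelfAdjoint.star_eq
  calc 0 ≤ (star (CFC.sqrt A) * B * CFC.sqrt A).trace :=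
        (nonneg_iff_posSemidef.mp (star_left_conjugate_nonneg hB _)).trace_nonneg
    _ = (A * B).trace := by rw [hsqrt, trace_mul_cycle, CFC.sqrt_mul_sqrt_self A hA]

lemma Matrix.IsHermitian.trace_cfc {A : Matrix m m 𝕜} (hA : A.IsHermitian) (f : ℝ → ℝ) :
    (cfc f A).trace = ∑ i, (f (hA.eigenvalues i) : 𝕜) := by
  rw [hA.cfc_eq, IsHermitian.cfc, Unitary.conjStarAlgAut_apply, trace_mul_cycle,
    Unitary.coe_star_mul_self, one_mul, trace_diagonal]
  rfl

end Spectral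

lemma matAbs_eq_abs {n : ℕ} (A : Matrix (Fin n) (Fin n) ℂ) : matAbs A = CFC.abs A := by
  have hA := posSemidef_conjTranspose_mul_self A
  rw [CFC.abs, star_eq_conjTranspose, CFC.sqrt_eq_real_sqrt _ hA.nonneg,
    cfcₙ_eq_cfc (hf0 := Real.sqrt_zero), hA.1.cfc_eq]
  simp [matAbs, IsHermitian.cfc, Unitary.conjStarAlgAut_apply]

lemma Matrix.IsHermitian.traceNorm_eq_sum_abs_eigenvalues {n : ℕ}
    {A : Matrix (Fin n) (Fin n) ℂ} (hA : A.IsHermitian) :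
    traceNorm A = ∑ i, |hA.eigenvalues i| := by
  rw [traceNorm, matAbs_eq_abs, CFC.abs_eq_cfc_norm A hA.isSelfAdjoint, hA.trace_cfc]
  simp

-- The witness is the spectral projection of `A` onto its positive eigenvalues.
lemma Matrix.IsHermitian.exists_re_trace_mul_eq {n : ℕ} {A : Matrix (Fin n) (Fin n) ℂ}
    (hA : A.IsHermitian) :
    ∃ P, 0 ≤ P ∧ P ≤ 1 ∧ ((A * P).trace).re = ((A.trace).re + traceNorm A) / 2 := by
  set χ : ℝ → ℝ := fun x => if 0 < x then 1 else 0
  have hχ : ContinuousOn χ (spectrum ℝ A) := A.finite_real_spectrum.continuousOn χ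
  refine ⟨cfc χ A, cfc_nonneg fun x _ => by positivity, cfc_le_one _ _ fun x _ => ?_, ?_⟩
  · dsimp only [χ]; split_ifs <;> norm_num
  have hAP : A * cfc χ A = cfc (fun x => x * χ x) A := by
    rw [cfc_mul (fun x => x) χ A continuousOn_id hχ, cfc_id' ℝ A]
  rw [hAP, hA.trace_cfc, hA.traceNorm_eq_sum_abs_eigenvalues, hA.trace_eq_sum_eigenvalues,
    Complex.re_sum, Complex.re_sum, ← sum_add_distrib, sum_div]
  refine sum_congr rfl fun i _ => ?_
  simp only [χ]
  split_ifs with h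
  · simp [abs_of_pos h]
  · simp [abs_of_nonpos (not_lt.mp h)]

lemma Finset.sum_filter_fst_lt_snd_add {ι : Type*} [Fintype ι] [LinearOrder ι] (f : ι → ℝ) :
    ∑ p ∈ univ.filter (fun p : ι × ι => p.1 < p.2), (f p.1 + f p.2)
      = (Fintype.card ι - 1) * ∑ i, f i := by
  have hswap : ∑ p ∈ univ.filter (fun p : ι × ι => p.1 < p.2), f p.2
      = ∑ p ∈ univ.filter (fun p : ι × ι => p.2 < p.1), f p.1 :=
    sum_equiv (Equiv.prodComm ι ι) (by simp) (by simp)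
  have hne : ∀ i, ∑ j, (if i ≠ j then f i else 0) = (Fintype.card ι - 1) * f i := by
    intro i
    rw [sum_ite, sum_const_zero, add_zero, sum_const, filter_ne, card_erase_of_mem (mem_univ i),
      card_univ, nsmul_eq_mul, Nat.cast_pred (Fintype.card_pos_iff.mpr ⟨i⟩)]
  rw [sum_add_distrib, hswap, ← sum_union (disjoint_filter.mpr fun p _ h => lt_asymm h),
    ← filter_or]
  simp_rw [← ne_iff_lt_or_gt]
  rw [sum_filter, Fintype.sum_prod_type, mul_sum]
  exact sum_congr rfl fun i _ => hne i

section Discrimination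

variable {n r : ℕ} (q : Fin r → ℝ) (ρ : Fin r → Matrix (Fin n) (Fin n) ℂ)

noncomputable def successProbLinearMap : (Fin r → Matrix (Fin n) (Fin n) ℂ) →ₗ[ℝ] ℝ where
  toFun := successProb q ρ
  map_add' M N := by
    simp only [successProb, Pi.add_apply, trace_add, Complex.add_re, mul_add,
      sum_add_distrib]
  map_smul' c M := by
    simp only [successProb, Pi.smul_apply, Matrix.mul_smul, trace_smul, Complex.smul_re,
      smul_eq_mul, RingHom.id_apply, mul_sum]
    exact sum_congr rfl fun i _ => by ring

lemma successProbLinearMap_apply (M : Fin r → Matrix (Fin n) (Fin n) ℂ) :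
    successProbLinearMap q ρ M = successProb q ρ M := rfl

lemma successProb_single (i : Fin r) (P : Matrix (Fin n) (Fin n) ℂ) :
    successProb q ρ (Pi.single i P) = q i * ((ρ i * P).trace).re := by
  rw [successProb, Fintype.sum_eq_single i fun j hj => by simp [Pi.single_eq_of_ne hj],
    Pi.single_eq_same]

lemma IsPOVM.sum_smul {ι : Type*} {S : Finset ι} {w : ι → ℝ}
    {M : ι → Fin r → Matrix (Fin n) (Fin n) ℂ} (hw : ∀ s ∈ S, 0 ≤ w s)
    (hw1 : ∑ s ∈ S, w s = 1) (hM : ∀ s ∈ S, IsPOVM (M s)) :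
    IsPOVM (∑ s ∈ S, w s • M s) := by
  refine ⟨fun k => ?_, ?_⟩
  · rw [← nonneg_iff_posSemidef, Finset.sum_apply]
    exact sum_nonneg fun s hs =>
      smul_nonneg (hw s hs) (nonneg_iff_posSemidef.mpr ((hM s hs).1 k))
  · simp only [Finset.sum_apply, Pi.smul_apply]
    rw [sum_comm, sum_congr rfl fun s hs => by rw [← smul_sum, (hM s hs).2], ← Finset.sum_smul,
      hw1, one_smul]

lemma IsPOVM.re_trace_mul_le_one {M : Fin r → Matrix (Fin n) (Fin n) ℂ} (hM : IsPOVM M)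
    {σ : Matrix (Fin n) (Fin n) ℂ} (hσ : IsDensity σ) (i : Fin r) :
    ((σ * M i).trace).re ≤ 1 := by
  have hsum : ∑ j, ((σ * M j).trace).re = 1 := by
    rw [← Complex.re_sum, ← trace_sum, ← Matrix.mul_sum, hM.2, Matrix.mul_one, hσ.2,
      Complex.one_re]
  rw [← hsum]
  exact single_le_sum (fun j _ => (Complex.nonneg_iff.mp (trace_mul_nonneg
    (nonneg_iff_posSemidef.mpr hσ.1) (nonneg_iff_posSemidef.mpr (hM.1 j)))).1) (mem_univ i)

variable {q ρ}

lemma le_optSuccess (hρ : ∀ i, IsDensity (ρ i)) (hq : ∀ i, 0 ≤ q i)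
    {M : Fin r → Matrix (Fin n) (Fin n) ℂ} (hM : IsPOVM M) :
    successProb q ρ M ≤ optSuccess q ρ := by
  refine le_csSup ⟨∑ i, q i, ?_⟩ ⟨M, hM, rfl⟩
  rintro _ ⟨N, hN, rfl⟩
  exact sum_le_sum fun i _ =>
    mul_le_of_le_one_right (hq i) (hN.re_trace_mul_le_one (hρ i) i)

lemma exists_isPOVM_successProb_eq (hρ : ∀ i, IsDensity (ρ i)) (i j : Fin r) :
    ∃ M, IsPOVM M ∧
      successProb q ρ M = (q i + q j + traceNorm ((q i : ℂ) • ρ i - (q j : ℂ) • ρ j)) / 2 := by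
  set A := (q i : ℂ) • ρ i - (q j : ℂ) • ρ j
  have hA : A.IsHermitian :=
    ((hρ i).1.1.smul (Complex.conj_ofReal _)).sub ((hρ j).1.1.smul (Complex.conj_ofReal _))
  obtain ⟨P, hP0, hP1, hAP⟩ := hA.exists_re_trace_mul_eq
  set M : Fin r → Matrix (Fin n) (Fin n) ℂ := Pi.single i P + Pi.single j (1 - P)
  have hM : 0 ≤ M :=
    add_nonneg (Pi.single_nonneg.mpr hP0) (Pi.single_nonneg.mpr (sub_nonneg_of_le hP1))
  refine ⟨M, ⟨fun k => nonneg_iff_posSemidef.mp (hM k), ?_⟩, ?_⟩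
  · simp [M, sum_add_distrib]
  have htrA : (A.trace).re = q i - q j := by
    simp [A, trace_sub, trace_smul, (hρ i).2, (hρ j).2]
  have htrAP :
      ((A * P).trace).re = q i * ((ρ i * P).trace).re - q j * ((ρ j * P).trace).re := by
    simp [A, Matrix.sub_mul, trace_sub, trace_smul]
  have htrP : ((ρ j * (1 - P)).trace).re = 1 - ((ρ j * P).trace).re := by
    simp [Matrix.mul_sub, trace_sub, (hρ j).2]
  rw [← successProbLinearMap_apply, map_add, successProbLinearMap_apply,
    successProbLinearMap_apply, successProb_single, successProb_single, htrP]
  linarith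

end Discrimination

theorem stmt7 {n r : ℕ} (hr : 2 ≤ r) (ρ : Fin r → Matrix (Fin n) (Fin n) ℂ)
    (q : Fin r → ℝ) (hρ : ∀ i, IsDensity (ρ i)) (hq : ∀ i, 0 < q i)
    (hq1 : ∑ i, q i = 1) :
    optSuccess q ρ ≥
      (1 / (r : ℝ)) * (1 + (1 / ((r : ℝ) - 1)) *
        ∑ p ∈ Finset.univ.filter (fun p : Fin r × Fin r => p.1 < p.2),
            traceNorm ((q p.1 : ℂ) • ρ p.1 - (q p.2 : ℂ) • ρ p.2)) := by
  set S := univ.filter (fun p : Fin r × Fin r => p.1 < p.2)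
  choose M hM hsucc using fun p : Fin r × Fin r => exists_isPOVM_successProb_eq (q := q) hρ p.1 p.2
  have hr1 : (0 : ℝ) < r - 1 := by
    have : (2 : ℝ) ≤ r := by exact_mod_cast hr
    linarith
  have hcard : (#S : ℝ) = r * (r - 1) / 2 := by
    have := sum_filter_fst_lt_snd_add (fun _ : Fin r => (1 : ℝ))
    simp only [sum_const, nsmul_eq_mul, Fintype.card_fin, card_univ] at this
    linarith
  have hS : (0 : ℝ) < #S := by rw [hcard]; positivity
  have hw : ∑ _p ∈ S, (#S : ℝ)⁻¹ = 1 := by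
    rw [sum_const, nsmul_eq_mul, mul_inv_cancel₀ hS.ne']
  have havg := IsPOVM.sum_smul (fun _ _ => inv_nonneg.mpr hS.le) hw (fun p _ => hM p)
  refine ge_iff_le.mpr (le_trans (le_of_eq ?_) (le_optSuccess hρ (fun i => (hq i).le) havg))
  rw [← successProbLinearMap_apply, map_sum]
  simp_rw [map_smul, successProbLinearMap_apply, hsucc, smul_eq_mul]
  rw [← mul_sum, ← sum_div, sum_add_distrib, sum_filter_fst_lt_snd_add, hq1, Fintype.card_fin,
    hcard]
  field_simp
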